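/- arXiv:math/0602132 — 2 statements merged into one kernel-verified Lean document; each statement's English description precedes it below -/
import Mathlib

section
/- If (R, Y) ∈ SE(n) satisfies σ(R,Y) = (R,Y)⁻¹ (i.e., J R J = R⁻¹ and J Y = −R⁻¹ Y) and R = A J A⁻¹ J for some A ∈ SO(n), then Y lies in the p-plane π = A · span{E₁,…,E_p}. -/
open Matrix

/-- if `(R,Y) ∈ SE(n)` satisfies `σ(R,Y) = (R,Y)⁻¹`, i.e.
`J R J = R⁻¹` and `J Y = -R⁻¹ Y`, and `R = A J A⁻¹ J` for some `A ∈ SO(n)`,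
then `Y` lies in the `p`-plane `π = A · span{E₁,…,E_p}`. -/
theorem Y_in_plane (p q : ℕ) (hp : 1 ≤ p) (hq : 1 ≤ q)
    (J : Matrix (Fin p ⊕ Fin q) (Fin p ⊕ Fin q) ℝ)
    (hJ : J = Matrix.fromBlocks (-1) 0 0 1)
    (R A : Matrix (Fin p ⊕ Fin q) (Fin p ⊕ Fin q) ℝ) (Y : Fin p ⊕ Fin q → ℝ)
    (hR : Rᵀ * R = 1 ∧ R.det = 1) (hA : Aᵀ * A = 1 ∧ A.det = 1)
    (hQ1 : J * R * J = R⁻¹) (hQ2 : J.mulVec Y = -(R⁻¹.mulVec Y))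
    (hRA : R = A * J * A⁻¹ * J) :
    Y ∈ (Submodule.span ℝ
        (Set.range fun i : Fin p => (Pi.single (Sum.inl i) 1 : Fin p ⊕ Fin q → ℝ))).map
      A.mulVecLin := by
  have hAdet : IsUnit A.det := by simp [hA.2]
  have hAinv : A * A⁻¹ = 1 := A.mul_nonsing_inv hAdet
  have hinvA : A⁻¹ * A = 1 := A.nonsing_inv_mul hAdet
  have hJJ : J * J = 1 := by
    subst hJ
    simp [Matrix.fromBlocks_multiply, ← Matrix.fromBlocks_one]
  have hJR : J * R⁻¹ = A * J * A⁻¹ := by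
    rw [← hQ1, hRA]
    calc J * (J * (A * J * A⁻¹ * J) * J)
        = (J * J) * (A * J * A⁻¹) * (J * J) := by simp only [mul_assoc]
      _ = A * J * A⁻¹ := by rw [hJJ]; simp
  -- key equation: Y = -(A*J*A⁻¹).mulVec Y
  have h2 : Y = -((A * J * A⁻¹).mulVec Y) := by
    have := congrArg J.mulVec hQ2
    rwa [Matrix.mulVec_mulVec, hJJ, Matrix.one_mulVec, Matrix.mulVec_neg,
      Matrix.mulVec_mulVec, hJR] at this
  set Z : Fin p ⊕ Fin q → ℝ := A⁻¹.mulVec Y with hZdef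
  have hm : A⁻¹ * (A * J * A⁻¹) = J * A⁻¹ := by
    calc A⁻¹ * (A * J * A⁻¹) = (A⁻¹ * A) * J * A⁻¹ := by simp only [mul_assoc]
      _ = J * A⁻¹ := by rw [hinvA, one_mul]
  have hZ : Z = -(J.mulVec Z) := by
    conv_lhs => rw [hZdef, h2]
    rw [Matrix.mulVec_neg, Matrix.mulVec_mulVec, hm, ← Matrix.mulVec_mulVec, hZdef]
  have hZr : ∀ j : Fin q, Z (Sum.inr j) = 0 := by
    intro j
    have := congrFun hZ (Sum.inr j)
    simp only [Pi.neg_apply, Matrix.mulVec, dotProduct, hJ, Fintype.sum_sum_type,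
      Matrix.fromBlocks_apply₂₁, Matrix.fromBlocks_apply₂₂, Matrix.zero_apply,
      Matrix.one_apply, zero_mul, Finset.sum_const_zero, zero_add, ite_mul, one_mul,
      Finset.sum_ite_eq, Finset.mem_univ, if_true] at this
    linarith
  have hYZ : Y = A.mulVec Z := by
    rw [hZdef, Matrix.mulVec_mulVec, hAinv, Matrix.one_mulVec]
  refine ⟨Z, ?_, hYZ.symm⟩
  have hZsum : Z = ∑ i : Fin p, Z (Sum.inl i) • (Pi.single (Sum.inl i) 1 : Fin p ⊕ Fin q → ℝ) := by
    funext x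
    cases x with
    | inl k =>
      simp [Pi.single_apply, Finset.sum_ite_eq]
    | inr j =>
      simp [Pi.single_apply, hZr j]
  rw [hZsum]
  exact Submodule.sum_mem _ fun i _ => Submodule.smul_mem _ _
    (Submodule.subset_span ⟨i, rfl⟩)
end

section
/- The formula (A, X) ∗ (π, Y) = (Aπ, A Y + 2 pr_{Aπ}(X)) defines a group action of SE(n) on the canonical vector bundle C_{n,p} = {(π, Y) : π a p-dimensional subspace of ℝⁿ, Y ∈ π}, i.e., (I,0) ∗ (π,Y) = (π,Y) and (g₁ g₂) ∗ (π,Y) = g₁ ∗ (g₂ ∗ (π,Y)). -/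
/-!
An isometry carries orthogonal projections to orthogonal projections:
`A (pr_K X) = pr_{AK} (A X)`. With this, `(A₁A₂, X₁ + A₁X₂) ∗ (π, Y)` and
`(A₁, X₁) ∗ ((A₂, X₂) ∗ (π, Y))` both expand to
`(A₁A₂π, A₁A₂Y + 2 pr_{A₁A₂π} X₁ + 2 A₁ pr_{A₂π} X₂)`.
-/

open Matrix

/-- The action `(A, X) ∗ (π, Y) = (Aπ, A Y + 2 pr_{Aπ}(X))` of a Euclidean
motion on a pair (subspace, vector). -/
noncomputable def bundleAct (n : ℕ)
    (g : Matrix (Fin n) (Fin n) ℝ × EuclideanSpace ℝ (Fin n))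
    (x : Submodule ℝ (EuclideanSpace ℝ (Fin n)) × EuclideanSpace ℝ (Fin n)) :
    Submodule ℝ (EuclideanSpace ℝ (Fin n)) × EuclideanSpace ℝ (Fin n) :=
  (x.1.map (Matrix.toEuclideanLin g.1),
    Matrix.toEuclideanLin g.1 x.2 +
      (2 : ℝ) • ((Submodule.orthogonalProjectionOnto (x.1.map (Matrix.toEuclideanLin g.1)) g.2 :
        x.1.map (Matrix.toEuclideanLin g.1)) : EuclideanSpace ℝ (Fin n)))

namespace Matrix

variable {𝕜 m n : Type*} [RCLike 𝕜] [Fintype m] [Fintype n] [DecidableEq m]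
  [DecidableEq n]

theorem inner_toEuclideanLin_toEuclideanLin {A : Matrix m n 𝕜}
    (hA : Aᴴ * A = 1) (x y : EuclideanSpace 𝕜 n) :
    inner 𝕜 (toEuclideanLin A x) (toEuclideanLin A y) = inner 𝕜 x y := by
  rw [← LinearMap.adjoint_inner_left, ← toEuclideanLin_conjTranspose_eq_adjoint,
    ← LinearMap.comp_apply, ← toLpLin_mul_same, hA, toLpLin_one, LinearMap.id_apply]

noncomputable def toEuclideanLinearIsometry (A : Matrix m n 𝕜)
    (hA : Aᴴ * A = 1) : EuclideanSpace 𝕜 n →ₗᵢ[𝕜] EuclideanSpace 𝕜 m :=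
  (toEuclideanLin A).isometryOfInner (inner_toEuclideanLin_toEuclideanLin hA)

@[simp]
theorem coe_toEuclideanLinearIsometry (A : Matrix m n 𝕜) (hA : Aᴴ * A = 1) :
    ⇑(toEuclideanLinearIsometry A hA) = toEuclideanLin A :=
  rfl

@[simp]
theorem toLinearMap_toEuclideanLinearIsometry (A : Matrix m n 𝕜)
    (hA : Aᴴ * A = 1) : (toEuclideanLinearIsometry A hA).toLinearMap = toEuclideanLin A :=
  rfl

end Matrix

section bundleAct

variable {n : ℕ}

theorem bundleAct_eq (A : Matrix (Fin n) (Fin n) ℝ) (X : EuclideanSpace ℝ (Fin n))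
    (π : Submodule ℝ (EuclideanSpace ℝ (Fin n))) (Y : EuclideanSpace ℝ (Fin n)) :
    bundleAct n (A, X) (π, Y) =
      (π.map (toEuclideanLin A),
        toEuclideanLin A Y + (2 : ℝ) • (π.map (toEuclideanLin A)).starProjection X) :=
  rfl

theorem bundleAct_snd_mem (g : Matrix (Fin n) (Fin n) ℝ × EuclideanSpace ℝ (Fin n))
    {x : Submodule ℝ (EuclideanSpace ℝ (Fin n)) × EuclideanSpace ℝ (Fin n)} (hx : x.2 ∈ x.1) :
    (bundleAct n g x).2 ∈ (bundleAct n g x).1 :=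
  add_mem (Submodule.mem_map_of_mem hx) (Submodule.smul_mem _ _ (SetLike.coe_mem _))

theorem bundleAct_one_zero
    (x : Submodule ℝ (EuclideanSpace ℝ (Fin n)) × EuclideanSpace ℝ (Fin n)) :
    bundleAct n (1, 0) x = x := by
  simp [bundleAct, toLpLin_one]

theorem bundleAct_mul {A₁ : Matrix (Fin n) (Fin n) ℝ} (hA₁ : A₁ᵀ * A₁ = 1)
    (A₂ : Matrix (Fin n) (Fin n) ℝ) (X₁ X₂ : EuclideanSpace ℝ (Fin n))
    (x : Submodule ℝ (EuclideanSpace ℝ (Fin n)) × EuclideanSpace ℝ (Fin n)) :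
    bundleAct n (A₁ * A₂, X₁ + toEuclideanLin A₁ X₂) x =
      bundleAct n (A₁, X₁) (bundleAct n (A₂, X₂) x) := by
  obtain ⟨π, Y⟩ := x
  rw [← conjTranspose_eq_transpose_of_trivial] at hA₁
  have hproj := (toEuclideanLinearIsometry A₁ hA₁).map_starProjection (π.map (toEuclideanLin A₂)) X₂
  simp only [toLinearMap_toEuclideanLinearIsometry, coe_toEuclideanLinearIsometry] at hproj
  have hmul : toEuclideanLin (A₁ * A₂) = toEuclideanLin A₁ ∘ₗ toEuclideanLin A₂ :=
    toLpLin_mul_same _ _ _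
  simp only [bundleAct_eq, hmul, Submodule.map_comp, LinearMap.comp_apply, map_add,
    _root_.map_smul, ← hproj]
  exact Prod.ext rfl (by module)

end bundleAct

theorem bundleAct_is_action_general (n p : ℕ) :
    (∀ (A : Matrix (Fin n) (Fin n) ℝ) (X : EuclideanSpace ℝ (Fin n))
        (π : Submodule ℝ (EuclideanSpace ℝ (Fin n))) (Y : EuclideanSpace ℝ (Fin n)),
        Aᵀ * A = 1 → A.det = 1 → Module.finrank ℝ π = p → Y ∈ π →
        (bundleAct n (A, X) (π, Y)).2 ∈ (bundleAct n (A, X) (π, Y)).1) ∧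
    (∀ (π : Submodule ℝ (EuclideanSpace ℝ (Fin n))) (Y : EuclideanSpace ℝ (Fin n)),
        Y ∈ π → bundleAct n (1, 0) (π, Y) = (π, Y)) ∧
    (∀ (A₁ A₂ : Matrix (Fin n) (Fin n) ℝ) (X₁ X₂ : EuclideanSpace ℝ (Fin n))
        (π : Submodule ℝ (EuclideanSpace ℝ (Fin n))) (Y : EuclideanSpace ℝ (Fin n)),
        A₁ᵀ * A₁ = 1 → A₁.det = 1 → A₂ᵀ * A₂ = 1 → A₂.det = 1 →
        Module.finrank ℝ π = p → Y ∈ π →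
        bundleAct n (A₁ * A₂, X₁ + Matrix.toEuclideanLin A₁ X₂) (π, Y) =
          bundleAct n (A₁, X₁) (bundleAct n (A₂, X₂) (π, Y))) :=
  ⟨fun _ _ _ _ _ _ _ hY => bundleAct_snd_mem _ hY,
    fun _ _ _ => bundleAct_one_zero _,
    fun _ _ _ _ _ _ hA₁ _ _ _ _ _ => bundleAct_mul hA₁ _ _ _ _⟩

/-- the formula `(A,X) ∗ (π,Y) = (Aπ, AY + 2 pr_{Aπ} X)` defines a
group action of `SE(n)` on the canonical bundle
`C_{n,p} = {(π, Y) : π ∈ Gr(p,ℝⁿ), Y ∈ π}`: it preserves the bundle, fixes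
nothing more than required at the identity, and is compatible with the group
multiplication `(R₁,X₁)·(R₂,X₂) = (R₁R₂, X₁ + R₁X₂)`. -/
theorem bundleAct_is_action (n p : ℕ) (hp : 1 ≤ p) (hpn : p < n) :
    (∀ (A : Matrix (Fin n) (Fin n) ℝ) (X : EuclideanSpace ℝ (Fin n))
        (π : Submodule ℝ (EuclideanSpace ℝ (Fin n))) (Y : EuclideanSpace ℝ (Fin n)),
        Aᵀ * A = 1 → A.det = 1 → Module.finrank ℝ π = p → Y ∈ π →
        (bundleAct n (A, X) (π, Y)).2 ∈ (bundleAct n (A, X) (π, Y)).1) ∧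
    (∀ (π : Submodule ℝ (EuclideanSpace ℝ (Fin n))) (Y : EuclideanSpace ℝ (Fin n)),
        Y ∈ π → bundleAct n (1, 0) (π, Y) = (π, Y)) ∧
    (∀ (A₁ A₂ : Matrix (Fin n) (Fin n) ℝ) (X₁ X₂ : EuclideanSpace ℝ (Fin n))
        (π : Submodule ℝ (EuclideanSpace ℝ (Fin n))) (Y : EuclideanSpace ℝ (Fin n)),
        A₁ᵀ * A₁ = 1 → A₁.det = 1 → A₂ᵀ * A₂ = 1 → A₂.det = 1 →
        Module.finrank ℝ π = p → Y ∈ π →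
        bundleAct n (A₁ * A₂, X₁ + Matrix.toEuclideanLin A₁ X₂) (π, Y) =
          bundleAct n (A₁, X₁) (bundleAct n (A₂, X₂) (π, Y))) :=
  bundleAct_is_action_general n p
end
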